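/- arXiv:1906.08329 — 2 statements merged into one kernel-verified Lean document; each statement's English description precedes it below -/
import Mathlib

section
/- Let S be a semigroup, λ a nonzero cardinal, and n, i positive integers with i ≤ n ≤ λ. For any collection of distinct elements a₁,…,a_i of λ, the set S^{(a₁,…,a_i)}_{(a₁,…,a_i)} of all elements of 𝓘_λ^n(S) whose underlying partial map is the identity on {a₁,…,a_i} is a subsemigroup of 𝓘_λ^n(S), and the map (s₁,…,s_i) ↦ (element with rows (a₁,…,a_i), (s₁,…,s_i), (a₁,…,a_i)) is an isomorphism from the direct power Sⁱ onto this subsemigroup. -/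
open Classical

namespace ISemExt

/-- Carrier for the extension `𝓘_λ^n(S)`: an element is a function assigning to each
pair `(x,y)` of points of `lam` an optional value in `S` (its labelled graph). -/
def Elem (lam S : Type) : Type := lam → lam → Option S

/-- The zero element (the empty map). -/
def zeroE (lam S : Type) : Elem lam S := fun _ _ => none

/-- Multiplication in `𝓘_λ^n(S)`: composition of labelled partial maps,
multiplying the labels along composable pairs. -/
noncomputable def mulE {lam S : Type} [Mul S] (f g : Elem lam S) : Elem lam S :=
  fun x z =>
    if h : ∃ y s t, f x y = some s ∧ g y z = some t then
      some (h.choose_spec.choose * h.choose_spec.choose_spec.choose)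
    else none

/-- The graph of an element. -/
def graphOf {lam S : Type} (f : Elem lam S) : Set (lam × lam) :=
  {p | (f p.1 p.2).isSome}

/-- `Valid n f` says that `f` is an element of `𝓘_λ^n(S)`: it is a partial
injective labelled map (in both directions) of rank at most `n`. -/
def Valid {lam S : Type} (n : ℕ) (f : Elem lam S) : Prop :=
  (∀ ⦃x y₁ y₂⦄, (f x y₁).isSome → (f x y₂).isSome → y₁ = y₂) ∧
  (∀ ⦃x₁ x₂ y⦄, (f x₁ y).isSome → (f x₂ y).isSome → x₁ = x₂) ∧
  (graphOf f).Finite ∧ (graphOf f).ncard ≤ n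

/-- The element with rows `(a₁,…,a_i)`, `(s₁,…,s_i)`, `(b₁,…,b_i)`. -/
noncomputable def mk3 {lam S : Type} {i : ℕ} (a : Fin i → lam) (s : Fin i → S)
    (b : Fin i → lam) : Elem lam S :=
  fun x y => if h : ∃ j, a j = x ∧ b j = y then some (s h.choose) else none

section MulE

variable {lam S : Type} [Mul S] {f g : Elem lam S} {x z : lam}

theorem mulE_apply_eq_some {v : S} (hex : ∃ y s t, f x y = some s ∧ g y z = some t)
    (huniq : ∀ y s t, f x y = some s → g y z = some t → s * t = v) :
    mulE f g x z = some v := by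
  obtain ⟨hf, hg⟩ := hex.choose_spec.choose_spec.choose_spec
  rw [mulE, dif_pos hex, huniq _ _ _ hf hg]

theorem mulE_apply_eq_none (h : ¬∃ y s t, f x y = some s ∧ g y z = some t) :
    mulE f g x z = none :=
  dif_neg h

end MulE

section Mk3

variable {lam S : Type} {i : ℕ} {a b c : Fin i → lam} {s t : Fin i → S} {x y : lam}

theorem isSome_mk3_iff : (mk3 a s b x y).isSome ↔ ∃ j, a j = x ∧ b j = y := by
  unfold mk3
  split_ifs with h <;> simp [h]

theorem mk3_eq_none (h : ¬∃ j, a j = x ∧ b j = y) : mk3 a s b x y = none :=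
  dif_neg h

theorem mk3_apply_of_injective (ha : Function.Injective a) (j : Fin i) :
    mk3 a s b (a j) (b j) = some (s j) := by
  have h : ∃ k, a k = a j ∧ b k = b j := ⟨j, rfl, rfl⟩
  rw [mk3, dif_pos h, ha h.choose_spec.1]

theorem mk3_eq_some_iff (ha : Function.Injective a) {v : S} :
    mk3 a s b x y = some v ↔ ∃ j, a j = x ∧ b j = y ∧ s j = v := by
  constructor
  · intro h
    obtain ⟨j, rfl, rfl⟩ := isSome_mk3_iff.1 (Option.isSome_of_eq_some h)
    exact ⟨j, rfl, rfl, Option.some_injective _ ((mk3_apply_of_injective ha j).symm.trans h)⟩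
  · rintro ⟨j, rfl, rfl, rfl⟩
    exact mk3_apply_of_injective ha j

theorem graphOf_mk3 : graphOf (mk3 a s b) = Set.range fun j => (a j, b j) := by
  ext ⟨x, y⟩
  simp [graphOf, isSome_mk3_iff]

theorem valid_mk3 {n : ℕ} (ha : Function.Injective a) (hb : Function.Injective b)
    (hin : i ≤ n) : Valid n (mk3 a s b) := by
  refine ⟨?_, ?_, ?_, ?_⟩
  · intro x y₁ y₂ h₁ h₂
    obtain ⟨j, rfl, rfl⟩ := isSome_mk3_iff.1 h₁
    obtain ⟨k, hk, rfl⟩ := isSome_mk3_iff.1 h₂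
    rw [ha hk]
  · intro x₁ x₂ y h₁ h₂
    obtain ⟨j, rfl, rfl⟩ := isSome_mk3_iff.1 h₁
    obtain ⟨k, rfl, hk⟩ := isSome_mk3_iff.1 h₂
    rw [hb hk]
  · rw [graphOf_mk3]
    exact Set.finite_range _
  · have hinj : Function.Injective fun j => (a j, b j) :=
      fun j k h => ha (congrArg Prod.fst h)
    rw [graphOf_mk3, Set.ncard_range_of_injective hinj, Nat.card_eq_fintype_card,
      Fintype.card_fin]
    exact hin

theorem mk3_injective (ha : Function.Injective a) :
    Function.Injective fun s : Fin i → S => mk3 a s b := by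
  intro s t hst
  funext j
  have h := congrFun (congrFun hst (a j)) (b j)
  simp only [mk3_apply_of_injective ha] at h
  exact Option.some_injective _ h

theorem mulE_mk3 [Mul S] (ha : Function.Injective a) (hb : Function.Injective b) :
    mulE (mk3 a s b) (mk3 b t c) = mk3 a (s * t) c := by
  funext x z
  by_cases h : ∃ j, a j = x ∧ c j = z
  · obtain ⟨j, rfl, rfl⟩ := h
    rw [mk3_apply_of_injective ha]
    refine mulE_apply_eq_some
      ⟨b j, s j, t j, mk3_apply_of_injective ha j, mk3_apply_of_injective hb j⟩ ?_
    intro y s' t' hs ht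
    obtain ⟨k, hk, rfl, rfl⟩ := (mk3_eq_some_iff ha).1 hs
    obtain ⟨l, hl, -, rfl⟩ := (mk3_eq_some_iff hb).1 ht
    obtain rfl := ha hk
    obtain rfl := hb hl
    rfl
  · rw [mk3_eq_none h]
    refine mulE_apply_eq_none ?_
    rintro ⟨y, s', t', hs, ht⟩
    obtain ⟨k, rfl, rfl, -⟩ := (mk3_eq_some_iff ha).1 hs
    obtain ⟨l, hl, rfl, -⟩ := (mk3_eq_some_iff hb).1 ht
    obtain rfl := hb hl
    exact h ⟨_, rfl, rfl⟩

end Mk3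

theorem power_embeds_general (lam S : Type) [Semigroup S]
    (n i : ℕ) (hin : i ≤ n)
    (a : Fin i → lam) (ha : Function.Injective a) :
    (∀ s : Fin i → S, Valid n (mk3 a s a)) ∧
    (∀ f ∈ Set.range (fun s : Fin i → S => mk3 (lam := lam) a s a),
      ∀ g ∈ Set.range (fun s : Fin i → S => mk3 (lam := lam) a s a),
        mulE f g ∈ Set.range (fun s : Fin i → S => mk3 (lam := lam) a s a)) ∧
    Function.Injective (fun s : Fin i → S => mk3 (lam := lam) a s a) ∧
    (∀ s t : Fin i → S, mk3 (lam := lam) a (s * t) a = mulE (mk3 a s a) (mk3 a t a)) := by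
  refine ⟨fun _ => valid_mk3 ha ha hin, ?_, mk3_injective ha, fun _ _ => (mulE_mk3 ha ha).symm⟩
  rintro _ ⟨s, rfl⟩ _ ⟨t, rfl⟩
  exact ⟨s * t, (mulE_mk3 ha ha).symm⟩

/-- For distinct `a₁,…,a_i` in `λ`, the set `S^{(a₁,…,a_i)}_{(a₁,…,a_i)}` is a
subsemigroup of `𝓘_λ^n(S)` and the map `(s₁,…,s_i) ↦ (a,s,a)` is an isomorphism
of the direct power `Sⁱ` onto it: it is injective, multiplicative (where `Sⁱ`
carries the pointwise product), its image is exactly this set, and all its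
values lie in `𝓘_λ^n(S)`. -/
theorem power_embeds (lam S : Type) [Nonempty lam] [Semigroup S]
    (n i : ℕ) (hn : 0 < n) (hcard : (n : Cardinal) ≤ Cardinal.mk lam)
    (hi : 0 < i) (hin : i ≤ n)
    (a : Fin i → lam) (ha : Function.Injective a) :
    (∀ s : Fin i → S, Valid n (mk3 a s a)) ∧
    (∀ f ∈ Set.range (fun s : Fin i → S => mk3 (lam := lam) a s a),
      ∀ g ∈ Set.range (fun s : Fin i → S => mk3 (lam := lam) a s a),
        mulE f g ∈ Set.range (fun s : Fin i → S => mk3 (lam := lam) a s a)) ∧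
    Function.Injective (fun s : Fin i → S => mk3 (lam := lam) a s a) ∧
    (∀ s t : Fin i → S, mk3 (lam := lam) a (s * t) a = mulE (mk3 a s a) (mk3 a t a)) :=
  power_embeds_general lam S n i hin a ha

end ISemExt
end

section
/- Let S be a semigroup, λ a nonzero cardinal and n a positive integer with n ≤ λ. Then the semigroup 𝓘_λ^n(S) is orthodox (regular with the set of idempotents closed under multiplication) if and only if S is orthodox. -/
/-! Fixing a point `x₀`, the labelled maps `{(x₀, x₀)} → S` form a copy of `S` inside
`𝓘_λ^n(S)`, and an inverse of such a map can only contribute its label at `(x₀, x₀)`; this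
transfers regularity and closure of idempotents down to `S`. Conversely, relabelling the
transpose of `f` by chosen inverses of its labels gives an inverse of `f`, and idempotents of
`𝓘_λ^n(S)` are supported on the diagonal with idempotent labels, so their products are computed
labelwise in `S`. -/

open Classical

namespace ISemExt

variable {lam S : Type} [Mul S]

lemma exists_of_isSome_mulE {f g : Elem lam S} {x z : lam} (h : (mulE f g x z).isSome) :
    ∃ y, (f x y).isSome ∧ (g y z).isSome := by
  by_cases hex : ∃ y s t, f x y = some s ∧ g y z = some t
  · obtain ⟨y, s, t, hs, ht⟩ := hex
    exact ⟨y, by simp [hs], by simp [ht]⟩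
  · rw [show mulE f g x z = none from dif_neg hex] at h
    simp at h

lemma mulE_eq_none {f g : Elem lam S} {x z : lam}
    (h : ∀ y, (f x y).isSome → (g y z).isSome → False) : mulE f g x z = none := by
  refine dif_neg ?_
  rintro ⟨y, s, t, hs, ht⟩
  exact h y (by simp [hs]) (by simp [ht])

/-- `mulE` picks its middle point by choice, so its value is only determined when the
composable middle point is unique. -/
lemma mulE_eq_some {f g : Elem lam S} {x y z : lam} {s t : S}
    (huniq : ∀ y', (f x y').isSome → (g y' z).isSome → y' = y)
    (hs : f x y = some s) (ht : g y z = some t) : mulE f g x z = some (s * t) := by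
  have hex : ∃ y s t, f x y = some s ∧ g y z = some t := ⟨y, s, t, hs, ht⟩
  have hspec := hex.choose_spec.choose_spec.choose_spec
  have hy : hex.choose = y := huniq _ (by rw [hspec.1]; rfl) (by rw [hspec.2]; rfl)
  have hs' : hex.choose_spec.choose = s :=
    Option.some_injective _ (hspec.1.symm.trans (by rw [hy, hs]))
  have ht' : hex.choose_spec.choose_spec.choose = t :=
    Option.some_injective _ (hspec.2.symm.trans (by rw [hy, ht]))
  rw [mulE, dif_pos hex, ht', hs']

def IsDiag (f : Elem lam S) : Prop := ∀ ⦃x y⦄, (f x y).isSome → x = y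

lemma mulE_apply_of_isDiag_left {e : Elem lam S} (he : IsDiag e) (f : Elem lam S) (x z : lam) :
    mulE e f x z = Option.map₂ (· * ·) (e x x) (f x z) := by
  cases hex : e x x with
  | none =>
    refine mulE_eq_none fun y hy _ => ?_
    obtain rfl := he hy
    simp [hex] at hy
  | some a =>
    cases hfz : f x z with
    | none =>
      refine mulE_eq_none fun y hy hyz => ?_
      obtain rfl := he hy
      simp [hfz] at hyz
    | some b => exact mulE_eq_some (fun y hy _ => (he hy).symm) hex hfz

lemma mulE_apply_of_isDiag_right {e : Elem lam S} (he : IsDiag e) (f : Elem lam S) (x z : lam) :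
    mulE f e x z = Option.map₂ (· * ·) (f x z) (e z z) := by
  cases hez : e z z with
  | none =>
    rw [Option.map₂_none_right]
    refine mulE_eq_none fun y _ hy => ?_
    obtain rfl := he hy
    simp [hez] at hy
  | some a =>
    cases hfz : f x z with
    | none =>
      refine mulE_eq_none fun y hxy hy => ?_
      obtain rfl := he hy
      simp [hfz] at hxy
    | some b => exact mulE_eq_some (fun y _ hy => he hy) hfz hez

lemma IsDiag.mul {e f : Elem lam S} (he : IsDiag e) (hf : IsDiag f) : IsDiag (mulE e f) := by
  intro x z h
  obtain ⟨y, hxy, hyz⟩ := exists_of_isSome_mulE h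
  exact (he hxy).trans (hf hyz)

omit [Mul S] in
lemma IsDiag.apply_of_ne {f : Elem lam S} (hf : IsDiag f) {x y : lam} (h : x ≠ y) :
    f x y = none :=
  Option.not_isSome_iff_eq_none.mp fun h' => h (hf h')

lemma IsDiag.of_mulE_self {n : ℕ} {e : Elem lam S} (hv : Valid n e) (he : mulE e e = e) :
    IsDiag e := by
  intro x y hxy
  obtain ⟨w, hxw, hwy⟩ := exists_of_isSome_mulE (by rwa [he])
  obtain rfl := hv.1 hxw hxy
  exact hv.2.1 hxy hwy

lemma IsDiag.mul_self_eq {e : Elem lam S} (hd : IsDiag e) (he : mulE e e = e) {x : lam} {a : S}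
    (ha : e x x = some a) : a * a = a := by
  have h := congrFun (congrFun he x) x
  rw [mulE_apply_of_isDiag_left hd, ha] at h
  exact Option.some_injective _ h

lemma mulE_mulE_self_of_isDiag
    (hS : ∀ a b : S, a * a = a → b * b = b → (a * b) * (a * b) = a * b)
    {e f : Elem lam S} (hde : IsDiag e) (hdf : IsDiag f) (he : mulE e e = e)
    (hf : mulE f f = f) : mulE (mulE e f) (mulE e f) = mulE e f := by
  funext x z
  by_cases hxz : x = z
  · subst hxz
    rw [mulE_apply_of_isDiag_left (hde.mul hdf), mulE_apply_of_isDiag_left hde]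
    cases hex : e x x with
    | none => rfl
    | some a =>
      cases hfx : f x x with
      | none => rfl
      | some b => simp [hS a b (hde.mul_self_eq he hex) (hdf.mul_self_eq hf hfx)]
  · have hd := hde.mul hdf
    rw [(hd.mul hd).apply_of_ne hxz, hd.apply_of_ne hxz]

noncomputable def singE (x₀ : lam) (a : S) : Elem lam S :=
  fun x y => if x = x₀ ∧ y = x₀ then some a else none

omit [Mul S] in
lemma singE_self (x₀ : lam) (a : S) : singE x₀ a x₀ x₀ = some a := if_pos ⟨rfl, rfl⟩

omit [Mul S] in
lemma isSome_singE {x₀ x y : lam} {a : S} : (singE x₀ a x y).isSome ↔ x = x₀ ∧ y = x₀ := by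
  unfold singE
  split_ifs <;> simp_all

omit [Mul S] in
lemma singE_injective (x₀ : lam) : Function.Injective (singE x₀ : S → Elem lam S) :=
  fun a b h => Option.some_injective _ <| by
    rw [← singE_self x₀ a, ← singE_self x₀ b, h]

omit [Mul S] in
lemma isDiag_singE (x₀ : lam) (a : S) : IsDiag (singE x₀ a) := fun _ _ h => by
  obtain ⟨rfl, rfl⟩ := isSome_singE.mp h
  rfl

omit [Mul S] in
lemma valid_singE {n : ℕ} (hn : 0 < n) (x₀ : lam) (a : S) : Valid n (singE x₀ a) := by
  have hgraph : graphOf (singE x₀ a) = {(x₀, x₀)} := by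
    ext ⟨x, y⟩
    simp [graphOf, isSome_singE]
  refine ⟨fun x y₁ y₂ h₁ h₂ => ?_, fun x₁ x₂ y h₁ h₂ => ?_, ?_, ?_⟩
  · rw [(isSome_singE.mp h₁).2, (isSome_singE.mp h₂).2]
  · rw [(isSome_singE.mp h₁).1, (isSome_singE.mp h₂).1]
  · simp [hgraph]
  · simpa [hgraph, Nat.one_le_iff_ne_zero] using hn.ne'

lemma mulE_singE_singE (x₀ : lam) (a b : S) :
    mulE (singE x₀ a) (singE x₀ b) = singE x₀ (a * b) := by
  funext x z
  rw [mulE_apply_of_isDiag_left (isDiag_singE x₀ a)]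
  by_cases hx : x = x₀ ∧ z = x₀
  · obtain ⟨rfl, rfl⟩ := hx
    simp [singE_self]
  · simp only [singE]
    by_cases hx₀ : x = x₀ <;> simp_all

lemma exists_eq_mul_mul_of_singE_eq {x₀ : lam} {a : S} {g : Elem lam S}
    (h : singE x₀ a = mulE (mulE (singE x₀ a) g) (singE x₀ a)) : ∃ b, a = a * b * a := by
  have h₀ := congrFun (congrFun h x₀) x₀
  rw [mulE_apply_of_isDiag_right (isDiag_singE x₀ a),
    mulE_apply_of_isDiag_left (isDiag_singE x₀ a), singE_self] at h₀
  cases hg : g x₀ x₀ with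
  | none => simp [hg] at h₀
  | some b => exact ⟨b, by simpa [hg] using h₀⟩

def pseudoInv (φ : S → S) (f : Elem lam S) : Elem lam S := fun y x => (f x y).map φ

omit [Mul S] in
lemma graphOf_pseudoInv (φ : S → S) (f : Elem lam S) :
    graphOf (pseudoInv φ f) = Prod.swap '' graphOf f := by
  ext ⟨x, y⟩
  simp [graphOf, pseudoInv]

omit [Mul S] in
lemma Valid.pseudoInv {n : ℕ} {f : Elem lam S} (hf : Valid n f) (φ : S → S) :
    Valid n (pseudoInv φ f) := by
  obtain ⟨hrow, hcol, hfin, hcard⟩ := hf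
  refine ⟨fun x y₁ y₂ h₁ h₂ => hcol (by simpa [ISemExt.pseudoInv] using h₁)
      (by simpa [ISemExt.pseudoInv] using h₂),
    fun x₁ x₂ y h₁ h₂ => hrow (by simpa [ISemExt.pseudoInv] using h₁)
      (by simpa [ISemExt.pseudoInv] using h₂), ?_, ?_⟩
  · rw [graphOf_pseudoInv]
    exact hfin.image _
  · rwa [graphOf_pseudoInv, Set.ncard_image_of_injective _ Prod.swap_injective]

lemma mulE_mulE_pseudoInv {n : ℕ} {f : Elem lam S} (hf : Valid n f) (φ : S → S) :
    mulE (mulE f (pseudoInv φ f)) f = fun x z => (f x z).map fun s => s * φ s * s := by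
  funext x z
  cases hxz : f x z with
  | none =>
    refine mulE_eq_none fun w hxw hwz => ?_
    obtain ⟨y, hxy, hwy⟩ := exists_of_isSome_mulE hxw
    obtain rfl := hf.1 (by simpa [pseudoInv] using hwy) hwz
    simp [hxz] at hxy
  | some s =>
    have hxx : mulE f (pseudoInv φ f) x x = some (s * φ s) :=
      mulE_eq_some (fun y hy _ => hf.1 hy (by simp [hxz])) hxz (by simp [pseudoInv, hxz])
    exact mulE_eq_some (fun w _ hw => hf.2.1 hw (by simp [hxz])) hxx hxz

theorem orthodox_iff_general (lam S : Type) [Nonempty lam] [Semigroup S]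
    (n : ℕ) (hn : 0 < n) :
    ((∀ f : Elem lam S, Valid n f →
        ∃ g : Elem lam S, Valid n g ∧ f = mulE (mulE f g) f) ∧
      (∀ f g : Elem lam S, Valid n f → Valid n g → mulE f f = f → mulE g g = g →
        mulE (mulE f g) (mulE f g) = mulE f g)) ↔
    ((∀ a : S, ∃ b : S, a = a * b * a) ∧
      (∀ a b : S, a * a = a → b * b = b → (a * b) * (a * b) = a * b)) := by
  obtain ⟨x₀⟩ := ‹Nonempty lam›
  constructor
  · rintro ⟨hreg, hidem⟩
    refine ⟨fun a => ?_, fun a b ha hb => singE_injective x₀ ?_⟩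
    · obtain ⟨g, -, hg⟩ := hreg _ (valid_singE hn x₀ a)
      exact exists_eq_mul_mul_of_singE_eq hg
    · have h := hidem _ _ (valid_singE hn x₀ a) (valid_singE hn x₀ b)
        (by rw [mulE_singE_singE, ha]) (by rw [mulE_singE_singE, hb])
      simpa only [mulE_singE_singE] using h
  · rintro ⟨hreg, hidem⟩
    refine ⟨fun f hf => ?_, fun e f he hf hee hff => ?_⟩
    · choose φ hφ using hreg
      refine ⟨pseudoInv φ f, hf.pseudoInv φ, ?_⟩
      rw [mulE_mulE_pseudoInv hf]
      funext x z
      cases f x z <;> simp [← hφ]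
    · exact mulE_mulE_self_of_isDiag hidem (.of_mulE_self he hee) (.of_mulE_self hf hff) hee hff

/-- The semigroup `𝓘_λ^n(S)` is orthodox (regular and the idempotents form a
subsemigroup) if and only if `S` is orthodox. -/
theorem orthodox_iff (lam S : Type) [Nonempty lam] [Semigroup S]
    (n : ℕ) (hn : 0 < n) (hcard : (n : Cardinal) ≤ Cardinal.mk lam) :
    ((∀ f : Elem lam S, Valid n f →
        ∃ g : Elem lam S, Valid n g ∧ f = mulE (mulE f g) f) ∧
      (∀ f g : Elem lam S, Valid n f → Valid n g → mulE f f = f → mulE g g = g →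
        mulE (mulE f g) (mulE f g) = mulE f g)) ↔
    ((∀ a : S, ∃ b : S, a = a * b * a) ∧
      (∀ a b : S, a * a = a → b * b = b → (a * b) * (a * b) = a * b)) :=
  orthodox_iff_general lam S n hn

end ISemExt
end
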